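/- Let σ₊, σ₋ > 0 be distinct, let φ be as in the two-valued LVM (φ(t) = [1/(√(2π t)(σ₊−σ₋))](σ₊ e^{−σ₋² t/8} − σ₋ e^{−σ₊² t/8}) + (σ₊σ₋/(2(σ₊−σ₋)))(𝒩(√t σ₋/2) − 𝒩(√t σ₊/2))), and let ψ(a,s,0) = 1/√(2πs) + a e^{a²s/2}𝒩(a√s). Define F(T, a, 0) = ∫_0^T φ(T−s) ψ(a, s, 0) e^{−a² s/2} ds. Then for any fixed a ∈ ℝ, F(T, a, 0) = (a/√(2π))√T + 1/2 + o(√T) as T → 0⁺. -/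

import Mathlib

open Real MeasureTheory Filter Topology Asymptotics Set

noncomputable def stdN (z : ℝ) : ℝ := ∫ t in Set.Iic z, (1 / Real.sqrt (2 * π)) * Real.exp (-t ^ 2 / 2)

lemma sqrt_two_pi_pos : 0 < Real.sqrt (2 * π) := Real.sqrt_pos.2 (by positivity)

lemma two_le_sqrt_two_pi : 2 ≤ Real.sqrt (2 * π) := by
  have h := Real.sqrt_le_sqrt (show (4:ℝ) ≤ 2 * π by nlinarith [Real.pi_gt_three])
  rwa [show Real.sqrt 4 = 2 by
    rw [show (4:ℝ) = 2 ^ 2 by norm_num, Real.sqrt_sq (by norm_num : (0:ℝ) ≤ 2)]] at h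

lemma gauss_integrable : Integrable (fun t : ℝ => (1 / Real.sqrt (2 * π)) * Real.exp (-t ^ 2 / 2)) := by
  have h := (integrable_exp_neg_mul_sq (by norm_num : (0:ℝ) < 1/2)).const_mul
    (1 / Real.sqrt (2 * π))
  convert h using 2 with t
  ring_nf

lemma gauss_total : ∫ t : ℝ, (1 / Real.sqrt (2 * π)) * Real.exp (-t ^ 2 / 2) = 1 := by
  rw [MeasureTheory.integral_const_mul]
  have : (fun t : ℝ => Real.exp (-t ^ 2 / 2)) = fun t : ℝ => Real.exp (-(1/2) * t ^ 2) := by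
    funext t; ring_nf
  rw [this, integral_gaussian]
  rw [show π / (1/2 : ℝ) = 2 * π by ring]
  field_simp

lemma stdN_half : stdN 0 = 1 / 2 := by
  set f : ℝ → ℝ := fun t => (1 / Real.sqrt (2 * π)) * Real.exp (-t ^ 2 / 2) with hf
  have heven : ∀ x : ℝ, f (-x) = f x := by intro x; simp [hf]
  have h1 : (∫ t in Iic (0:ℝ), f t) = ∫ t in Ioi (0:ℝ), f t := by
    have := integral_comp_neg_Iic (0:ℝ) f
    simp only [heven, neg_zero] at this
    exact this
  have h2 : (∫ t in Iic (0:ℝ), f t) + ∫ t in Ioi (0:ℝ), f t = 1 := by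
    rw [intervalIntegral.integral_Iic_add_Ioi gauss_integrable.integrableOn
      gauss_integrable.integrableOn]
    exact gauss_total
  have : (2:ℝ) * ∫ t in Iic (0:ℝ), f t = 1 := by rw [two_mul]; rw [h1] at h2 ⊢; linarith
  show (∫ t in Iic (0:ℝ), f t) = 1/2
  linarith
lemma stdN_eq (z : ℝ) :
    stdN z = 1 / 2 + ∫ t in (0:ℝ)..z, (1 / Real.sqrt (2 * π)) * Real.exp (-t ^ 2 / 2) := by
  have h := intervalIntegral.integral_Iic_sub_Iic (μ := volume)
    (f := fun t : ℝ => (1 / Real.sqrt (2 * π)) * Real.exp (-t ^ 2 / 2))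
    gauss_integrable.integrableOn gauss_integrable.integrableOn (a := 0) (b := z)
  have h0 : (∫ t in Iic (0:ℝ), (1 / Real.sqrt (2 * π)) * Real.exp (-t ^ 2 / 2)) = 1/2 := stdN_half
  unfold stdN
  rw [← h, h0]; ring

lemma stdN_lip (x y : ℝ) : |stdN x - stdN y| ≤ |x - y| / Real.sqrt (2 * π) := by
  set f : ℝ → ℝ := fun t => (1 / Real.sqrt (2 * π)) * Real.exp (-t ^ 2 / 2) with hf
  have hd : stdN x - stdN y = ∫ t in y..x, f t := by
    rw [stdN_eq, stdN_eq]
    have := intervalIntegral.integral_add_adjacent_intervals (a := (0:ℝ)) (b := y) (c := x)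
      (f := f) gauss_integrable.intervalIntegrable gauss_integrable.intervalIntegrable
    rw [← this]; ring
  rw [hd]
  have hb : ∀ t ∈ Set.uIoc y x, ‖f t‖ ≤ 1 / Real.sqrt (2 * π) := by
    intro t _
    rw [Real.norm_eq_abs, abs_of_nonneg (by positivity)]
    have : Real.exp (-t ^ 2 / 2) ≤ 1 := by
      rw [Real.exp_le_one_iff]; nlinarith [sq_nonneg t]
    have h1 : 0 ≤ 1 / Real.sqrt (2*π) := by positivity
    calc 1 / Real.sqrt (2*π) * Real.exp (-t^2/2) ≤ 1 / Real.sqrt (2*π) * 1 := by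
          exact mul_le_mul_of_nonneg_left this h1
      _ = 1 / Real.sqrt (2*π) := by ring
  have := intervalIntegral.norm_integral_le_of_norm_le_const hb
  rw [Real.norm_eq_abs] at this
  calc |∫ t in y..x, f t| ≤ 1 / Real.sqrt (2*π) * |x - y| := this
    _ = |x - y| / Real.sqrt (2*π) := by ring

lemma stdN_cont : Continuous stdN := by
  refine continuous_iff_continuousAt.2 fun x => ?_
  refine Metric.continuousAt_iff.2 fun ε hε => ?_
  refine ⟨ε * Real.sqrt (2*π) / 2, by positivity, fun {y} hy => ?_⟩
  rw [Real.dist_eq] at hy ⊢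
  have h2 : |y - x| / Real.sqrt (2*π) < ε := by
    rw [div_lt_iff₀ sqrt_two_pi_pos]
    calc |y - x| < ε * Real.sqrt (2*π) / 2 := hy
      _ ≤ ε * Real.sqrt (2*π) := by nlinarith [sqrt_two_pi_pos, hε]
  exact lt_of_le_of_lt (stdN_lip y x) h2
noncomputable def phi (σp σm t : ℝ) : ℝ :=
  1 / (Real.sqrt (2 * π * t) * (σp - σm)) *
      (σp * Real.exp (-σm ^ 2 * t / 8) - σm * Real.exp (-σp ^ 2 * t / 8))
    + σp * σm / (2 * (σp - σm)) *
      (stdN (Real.sqrt t * σm / 2) - stdN (Real.sqrt t * σp / 2))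

noncomputable def Erf (x : ℝ) : ℝ := 2 / Real.sqrt π * ∫ t in (0 : ℝ)..x, Real.exp (-t ^ 2)

noncomputable def psi0 (a s : ℝ) : ℝ :=
  1 / Real.sqrt (2 * π * s) + a * Real.exp (a ^ 2 * s / 2) * stdN (a * Real.sqrt s)

noncomputable def Ffun (σp σm T a : ℝ) : ℝ :=
  ∫ s in (0 : ℝ)..T, phi σp σm (T - s) * psi0 a s * Real.exp (-a ^ 2 * s / 2)

lemma exp_near_one {x : ℝ} (hx : 0 ≤ x) : |Real.exp (-x) - 1| ≤ x := by
  have h1 : Real.exp (-x) ≤ 1 := Real.exp_le_one_iff.2 (by linarith)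
  have h2 : -x + 1 ≤ Real.exp (-x) := by linarith [Real.add_one_le_exp (-x)]
  rw [abs_sub_comm, abs_of_nonneg (by linarith)]
  linarith

lemma psi_bound (a : ℝ) {s : ℝ} (hs : 0 < s) :
    |psi0 a s * Real.exp (-a ^ 2 * s / 2) - (1 / Real.sqrt (2 * π * s) + a / 2)|
      ≤ a ^ 2 * Real.sqrt s := by
  set r := Real.sqrt s with hr
  set c := Real.sqrt (2 * π) with hc
  have hrpos : 0 < r := Real.sqrt_pos.2 hs
  have hcpos : 0 < c := sqrt_two_pi_pos
  have hc2 : 2 ≤ c := two_le_sqrt_two_pi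
  have hr2 : r * r = s := Real.mul_self_sqrt hs.le
  have hsplit : Real.sqrt (2 * π * s) = c * r := by
    rw [hc, hr, ← Real.sqrt_mul (by positivity)]
  have hEone : Real.exp (a ^ 2 * s / 2) * Real.exp (-a ^ 2 * s / 2) = 1 := by
    rw [← Real.exp_add, show a ^ 2 * s / 2 + -a ^ 2 * s / 2 = 0 by ring, Real.exp_zero]
  have key : psi0 a s * Real.exp (-a ^ 2 * s / 2) - (1 / Real.sqrt (2 * π * s) + a / 2)
      = (1 / (c * r)) * (Real.exp (-a ^ 2 * s / 2) - 1)
        + a * (stdN (a * r) - 1 / 2) := by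
    unfold psi0
    rw [hsplit]
    linear_combination a * stdN (a * r) * hEone
  rw [key]
  have hE : |Real.exp (-a ^ 2 * s / 2) - 1| ≤ a ^ 2 * s / 2 := by
    have := exp_near_one (show (0:ℝ) ≤ a ^ 2 * s / 2 by positivity)
    rw [show -(a ^ 2 * s / 2) = -a ^ 2 * s / 2 by ring] at this
    exact this
  have hN : |stdN (a * r) - 1 / 2| ≤ |a| * r / c := by
    have := stdN_lip (a * r) 0
    rw [stdN_half, sub_zero, abs_mul, abs_of_nonneg hrpos.le] at this
    exact this
  have t1 : |(1 / (c * r)) * (Real.exp (-a ^ 2 * s / 2) - 1)| ≤ a ^ 2 * r / 4 := by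
    rw [abs_mul, abs_of_nonneg (by positivity : (0:ℝ) ≤ 1 / (c * r))]
    have step : (1 / (c * r)) * (a ^ 2 * s / 2) ≤ a ^ 2 * r / 4 := by
      rw [← hr2]
      have h1 : (1 / (c * r)) * (a ^ 2 * (r * r) / 2) = a ^ 2 * r / (2 * c) := by
        field_simp
      rw [h1, div_le_div_iff₀ (by positivity) (by norm_num)]
      nlinarith [mul_nonneg (sq_nonneg a) hrpos.le, hc2]
    calc 1 / (c * r) * |Real.exp (-a ^ 2 * s / 2) - 1| ≤ (1 / (c * r)) * (a ^ 2 * s / 2) :=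
          mul_le_mul_of_nonneg_left hE (by positivity)
      _ ≤ a ^ 2 * r / 4 := step
  have t2 : |a * (stdN (a * r) - 1 / 2)| ≤ a ^ 2 * r / 2 := by
    rw [abs_mul]
    calc |a| * |stdN (a * r) - 1 / 2| ≤ |a| * (|a| * r / c) :=
          mul_le_mul_of_nonneg_left hN (abs_nonneg a)
      _ ≤ a ^ 2 * r / 2 := by
          have e1 : |a| * (|a| * r / c) = a ^ 2 * r / c := by
            rw [show |a| * (|a| * r / c) = |a| * |a| * r / c by ring, abs_mul_abs_self, sq]
          rw [e1, div_le_div_iff₀ hcpos (by norm_num)]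
          nlinarith [mul_nonneg (sq_nonneg a) hrpos.le, hc2]
  calc |_ + _| ≤ _ + _ := abs_add_le _ _
    _ ≤ a ^ 2 * r / 4 + a ^ 2 * r / 2 := add_le_add t1 t2
    _ ≤ a ^ 2 * r := by nlinarith [sq_nonneg a, hrpos.le]
lemma phi_bound (σp σm : ℝ) (hp : 0 < σp) (hm : 0 < σm) (hne : σp ≠ σm) :
    ∃ K, 0 ≤ K ∧ ∀ t : ℝ, 0 < t →
      |phi σp σm t - 1 / Real.sqrt (2 * π * t)| ≤ K * Real.sqrt t := by
  set c := Real.sqrt (2 * π) with hcdef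
  have hcpos : 0 < c := sqrt_two_pi_pos
  set d := σp - σm with hddef
  have hd : d ≠ 0 := sub_ne_zero.2 hne
  have hda : 0 < |d| := abs_pos.2 hd
  refine ⟨(σp * σm ^ 2 + σm * σp ^ 2) / (8 * c * |d|) + σp * σm / (4 * c),
    by positivity, fun t ht => ?_⟩
  set r := Real.sqrt t with hrdef
  have hrpos : 0 < r := Real.sqrt_pos.2 ht
  have hr2 : r * r = t := Real.mul_self_sqrt ht.le
  have hsplit : Real.sqrt (2 * π * t) = c * r := by
    rw [hcdef, hrdef, ← Real.sqrt_mul (by positivity)]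
  set E1 := Real.exp (-σm ^ 2 * t / 8) with hE1def
  set E2 := Real.exp (-σp ^ 2 * t / 8) with hE2def
  set N1 := stdN (r * σm / 2) with hN1def
  set N2 := stdN (r * σp / 2) with hN2def
  have key : phi σp σm t - 1 / Real.sqrt (2 * π * t)
      = (σp * E1 - σm * E2 - d) / (c * r * d) + σp * σm / (2 * d) * (N1 - N2) := by
    unfold phi
    rw [hsplit, ← hE1def, ← hE2def, ← hrdef, ← hN1def, ← hN2def]
    field_simp
    ring
  rw [key]
  have hE1b : |E1 - 1| ≤ σm ^ 2 * t / 8 := by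
    have := exp_near_one (show (0:ℝ) ≤ σm ^ 2 * t / 8 by positivity)
    rwa [show -(σm ^ 2 * t / 8) = -σm ^ 2 * t / 8 by ring] at this
  have hE2b : |E2 - 1| ≤ σp ^ 2 * t / 8 := by
    have := exp_near_one (show (0:ℝ) ≤ σp ^ 2 * t / 8 by positivity)
    rwa [show -(σp ^ 2 * t / 8) = -σp ^ 2 * t / 8 by ring] at this
  have hNum : |σp * E1 - σm * E2 - d| ≤ (σp * σm ^ 2 + σm * σp ^ 2) / 8 * t := by
    have e : σp * E1 - σm * E2 - d = σp * (E1 - 1) - σm * (E2 - 1) := by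
      rw [hddef]; ring
    rw [e]
    calc |σp * (E1 - 1) - σm * (E2 - 1)| ≤ |σp * (E1 - 1)| + |σm * (E2 - 1)| := abs_sub _ _
      _ = σp * |E1 - 1| + σm * |E2 - 1| := by
          rw [abs_mul, abs_mul, abs_of_pos hp, abs_of_pos hm]
      _ ≤ σp * (σm ^ 2 * t / 8) + σm * (σp ^ 2 * t / 8) :=
          add_le_add (mul_le_mul_of_nonneg_left hE1b hp.le)
            (mul_le_mul_of_nonneg_left hE2b hm.le)
      _ = (σp * σm ^ 2 + σm * σp ^ 2) / 8 * t := by ring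
  have t1 : |(σp * E1 - σm * E2 - d) / (c * r * d)|
      ≤ (σp * σm ^ 2 + σm * σp ^ 2) / (8 * c * |d|) * r := by
    rw [abs_div, show |c * r * d| = c * r * |d| by
      rw [abs_mul, abs_mul, abs_of_pos hcpos, abs_of_pos hrpos]]
    have e : ((σp * σm ^ 2 + σm * σp ^ 2) / 8 * t) / (c * r * |d|)
        = (σp * σm ^ 2 + σm * σp ^ 2) / (8 * c * |d|) * r := by
      rw [← hr2]; field_simp
    rw [← e]
    exact div_le_div_of_nonneg_right hNum (by positivity) |>.trans_eq rfl
  have hNd : |N1 - N2| ≤ r * |d| / (2 * c) := by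
    have := stdN_lip (r * σm / 2) (r * σp / 2)
    rw [← hN1def, ← hN2def] at this
    have e : |r * σm / 2 - r * σp / 2| = r * |d| / 2 := by
      rw [show r * σm / 2 - r * σp / 2 = -(r * d / 2) by rw [hddef]; ring, abs_neg,
        abs_div, abs_mul, abs_of_pos hrpos, abs_of_nonneg (by norm_num : (0:ℝ) ≤ 2)]
    rw [e] at this
    calc |N1 - N2| ≤ r * |d| / 2 / c := this
      _ = r * |d| / (2 * c) := by ring
  have t2 : |σp * σm / (2 * d) * (N1 - N2)| ≤ σp * σm / (4 * c) * r := by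
    rw [abs_mul, abs_div, show |2 * d| = 2 * |d| by rw [abs_mul]; norm_num,
      abs_of_pos (by positivity : (0:ℝ) < σp * σm)]
    calc σp * σm / (2 * |d|) * |N1 - N2| ≤ σp * σm / (2 * |d|) * (r * |d| / (2 * c)) :=
          mul_le_mul_of_nonneg_left hNd (by positivity)
      _ = σp * σm / (4 * c) * r := by field_simp; ring
  calc |_ + _| ≤ _ + _ := abs_add_le _ _
    _ ≤ (σp * σm ^ 2 + σm * σp ^ 2) / (8 * c * |d|) * r + σp * σm / (4 * c) * r :=
        add_le_add t1 t2
    _ = ((σp * σm ^ 2 + σm * σp ^ 2) / (8 * c * |d|) + σp * σm / (4 * c)) * r := by ring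
section Integrals
open intervalIntegral

lemma int_rpow_Ioo {T : ℝ} (hT : 0 < T) :
    IntegrableOn (fun s : ℝ => 1 / Real.sqrt s) (Set.Ioo 0 T) volume ∧
      (∫ s in Set.Ioo (0:ℝ) T, 1 / Real.sqrt s) = 2 * Real.sqrt T := by
  have hEq : Set.EqOn (fun s : ℝ => s ^ (-(1/2) : ℝ)) (fun s : ℝ => 1 / Real.sqrt s)
      (Set.Icc 0 T) := by
    intro s hs
    rcases eq_or_lt_of_le hs.1 with h | h
    · simp [← h, Real.zero_rpow (by norm_num : (-(1/2):ℝ) ≠ 0)]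
    · simp only
      rw [Real.rpow_neg h.le, Real.sqrt_eq_rpow, one_div]
      norm_num
  have hii : IntervalIntegrable (fun s : ℝ => s ^ (-(1/2) : ℝ)) volume 0 T :=
    intervalIntegrable_rpow' (by norm_num)
  have hIoc : IntegrableOn (fun s : ℝ => s ^ (-(1/2) : ℝ)) (Set.Ioc 0 T) volume :=
    (intervalIntegrable_iff_integrableOn_Ioc_of_le hT.le).1 hii
  have hIoo : IntegrableOn (fun s : ℝ => 1 / Real.sqrt s) (Set.Ioo 0 T) volume := by
    refine ((hIoc.mono_set Set.Ioo_subset_Ioc_self).congr_fun ?_ measurableSet_Ioo)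
    exact fun s hs => hEq ⟨hs.1.le, hs.2.le⟩ 
  refine ⟨hIoo, ?_⟩
  have h1 : (∫ s in (0:ℝ)..T, s ^ (-(1/2) : ℝ)) = 2 * Real.sqrt T := by
    rw [integral_rpow (Or.inl (by norm_num))]
    rw [Real.zero_rpow (by norm_num : (-(1/2):ℝ) + 1 ≠ 0), Real.sqrt_eq_rpow,
      show (-(1/2):ℝ) + 1 = 1/2 by norm_num]
    ring
  calc (∫ s in Set.Ioo (0:ℝ) T, 1 / Real.sqrt s)
      = ∫ s in Set.Ioo (0:ℝ) T, s ^ (-(1/2) : ℝ) := by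
        refine setIntegral_congr_fun measurableSet_Ioo fun s hs => ?_
        exact (hEq ⟨hs.1.le, hs.2.le⟩).symm
    _ = ∫ s in Set.Ioc (0:ℝ) T, s ^ (-(1/2) : ℝ) := (integral_Ioc_eq_integral_Ioo).symm
    _ = ∫ s in (0:ℝ)..T, s ^ (-(1/2) : ℝ) := (integral_of_le hT.le).symm
    _ = 2 * Real.sqrt T := h1

lemma int_rpow_Ioo' {T : ℝ} (hT : 0 < T) :
    IntegrableOn (fun s : ℝ => 1 / Real.sqrt (T - s)) (Set.Ioo 0 T) volume ∧
      (∫ s in Set.Ioo (0:ℝ) T, 1 / Real.sqrt (T - s)) = 2 * Real.sqrt T := by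
  obtain ⟨hi, hv⟩ := int_rpow_Ioo hT
  have hii : IntervalIntegrable (fun s : ℝ => 1 / Real.sqrt s) volume 0 T := by
    rw [intervalIntegrable_iff_integrableOn_Ioc_of_le hT.le]
    exact hi.congr_set_ae (MeasureTheory.Ioo_ae_eq_Ioc).symm
  have hcomp : IntervalIntegrable (fun s : ℝ => 1 / Real.sqrt (T - s)) volume 0 T := by
    have h0 := hii.comp_sub_left T
    rw [show T - T = 0 by ring, show T - 0 = T by ring] at h0
    exact h0.symm
  constructor
  · exact ((intervalIntegrable_iff_integrableOn_Ioc_of_le hT.le).1 hcomp).congr_set_ae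
      MeasureTheory.Ioo_ae_eq_Ioc
  · have := integral_comp_sub_left (a := (0:ℝ)) (b := T) (fun s => 1 / Real.sqrt s) T
    rw [show T - T = 0 by ring, show T - 0 = T by ring] at this
    calc (∫ s in Set.Ioo (0:ℝ) T, 1 / Real.sqrt (T - s))
        = ∫ s in Set.Ioc (0:ℝ) T, 1 / Real.sqrt (T - s) := (integral_Ioc_eq_integral_Ioo).symm
      _ = ∫ s in (0:ℝ)..T, 1 / Real.sqrt (T - s) := (integral_of_le hT.le).symm
      _ = ∫ s in (0:ℝ)..T, 1 / Real.sqrt s := this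
      _ = ∫ s in Set.Ioc (0:ℝ) T, 1 / Real.sqrt s := integral_of_le hT.le
      _ = ∫ s in Set.Ioo (0:ℝ) T, 1 / Real.sqrt s := integral_Ioc_eq_integral_Ioo
      _ = 2 * Real.sqrt T := hv

end Integrals
section Arcsin
open intervalIntegral

lemma int_arcsin {T : ℝ} (hT : 0 < T) :
    IntegrableOn (fun s : ℝ => 1 / Real.sqrt (s * (T - s))) (Set.Ioo 0 T) volume ∧
      (∫ s in Set.Ioo (0:ℝ) T, 1 / Real.sqrt (s * (T - s))) = π := by
  set f : ℝ → ℝ := fun s => 1 / Real.sqrt (s * (T - s)) with hfdef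
  have hmeas : Measurable f := by
    have hc : Continuous fun s : ℝ => Real.sqrt (s * (T - s)) := by
      exact (continuous_id.mul (continuous_const.sub continuous_id)).sqrt
    simpa [hfdef, one_div] using hc.measurable
  set C : ℝ := 1 / Real.sqrt (T / 2) with hCdef
  have hC : 0 < C := by rw [hCdef]; positivity
  have hbound : ∀ s ∈ Set.Ioo (0:ℝ) T, f s ≤ C * (1 / Real.sqrt s) + C * (1 / Real.sqrt (T - s)) := by
    intro s hs
    have hs0 : 0 < s := hs.1
    have hsT : 0 < T - s := sub_pos.2 hs.2
    have hsplit : Real.sqrt (s * (T - s)) = Real.sqrt s * Real.sqrt (T - s) :=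
      Real.sqrt_mul hs0.le _
    rcases le_or_gt s (T / 2) with h | h
    · have h2 : T / 2 ≤ T - s := by linarith
      have hle : Real.sqrt s * Real.sqrt (T / 2) ≤ Real.sqrt s * Real.sqrt (T - s) :=
        mul_le_mul_of_nonneg_left (Real.sqrt_le_sqrt h2) (Real.sqrt_nonneg s)
      have e1 : f s ≤ 1 / (Real.sqrt s * Real.sqrt (T / 2)) := by
        rw [hfdef]; simp only; rw [hsplit]
        exact one_div_le_one_div_of_le (by positivity) hle
      have e2 : 1 / (Real.sqrt s * Real.sqrt (T / 2)) = C * (1 / Real.sqrt s) := by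
        rw [hCdef]; field_simp
      have e3 : 0 ≤ C * (1 / Real.sqrt (T - s)) := by positivity
      calc f s ≤ 1 / (Real.sqrt s * Real.sqrt (T / 2)) := e1
        _ = C * (1 / Real.sqrt s) := e2
        _ ≤ _ := le_add_of_nonneg_right e3
    · have h2 : T / 2 ≤ s := h.le
      have hle : Real.sqrt (T / 2) * Real.sqrt (T - s) ≤ Real.sqrt s * Real.sqrt (T - s) :=
        mul_le_mul_of_nonneg_right (Real.sqrt_le_sqrt h2) (Real.sqrt_nonneg _)
      have e1 : f s ≤ 1 / (Real.sqrt (T / 2) * Real.sqrt (T - s)) := by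
        rw [hfdef]; simp only; rw [hsplit]
        exact one_div_le_one_div_of_le (by positivity) hle
      have e2 : 1 / (Real.sqrt (T / 2) * Real.sqrt (T - s)) = C * (1 / Real.sqrt (T - s)) := by
        rw [hCdef]; field_simp
      have e3 : 0 ≤ C * (1 / Real.sqrt s) := by positivity
      calc f s ≤ 1 / (Real.sqrt (T / 2) * Real.sqrt (T - s)) := e1
        _ = C * (1 / Real.sqrt (T - s)) := e2
        _ ≤ _ := le_add_of_nonneg_left e3
  have hg : IntegrableOn
      (fun s : ℝ => C * (1 / Real.sqrt s) + C * (1 / Real.sqrt (T - s))) (Set.Ioo 0 T) volume :=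
    ((int_rpow_Ioo hT).1.const_mul C).add ((int_rpow_Ioo' hT).1.const_mul C)
  have hint : IntegrableOn f (Set.Ioo 0 T) volume := by
    refine Integrable.mono' hg (hmeas.aestronglyMeasurable.restrict) ?_
    refine (ae_restrict_iff' measurableSet_Ioo).2 (Filter.Eventually.of_forall fun s hs => ?_)
    rw [Real.norm_eq_abs, abs_of_nonneg (by rw [hfdef]; positivity)]
    exact hbound s hs
  refine ⟨hint, ?_⟩
  set F : ℝ → ℝ := fun s => Real.arcsin ((2 / T) * s - 1) with hFdef
  have hcontF : Continuous F :=
    Real.continuous_arcsin.comp ((continuous_const.mul continuous_id).sub continuous_const)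
  have hderiv : ∀ s ∈ Set.Ioo (0:ℝ) T, HasDerivAt F (f s) s := by
    intro s hs
    have hs0 : 0 < s := hs.1
    have hsT : 0 < T - s := sub_pos.2 hs.2
    have hx1 : (2 / T) * s - 1 ≠ -1 := by
      have : 0 < (2 / T) * s := by positivity
      intro hcon; linarith
    have hx2 : (2 / T) * s - 1 ≠ 1 := by
      have h1 : (2 / T) * s < 2 := by
        rw [div_mul_eq_mul_div, div_lt_iff₀ hT]
        nlinarith
      intro hcon; linarith
    have inner : HasDerivAt (fun u : ℝ => (2 / T) * u - 1) (2 / T) s := by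
      simpa using ((hasDerivAt_id s).const_mul (2 / T)).sub_const 1
    have h := (Real.hasDerivAt_arcsin hx1 hx2).comp s inner
    have heq : 1 / Real.sqrt (1 - ((2 / T) * s - 1) ^ 2) * (2 / T) = f s := by
      have e1 : 1 - ((2 / T) * s - 1) ^ 2 = (2 / T) ^ 2 * (s * (T - s)) := by
        field_simp; ring
      rw [e1, Real.sqrt_mul (sq_nonneg _), Real.sqrt_sq (by positivity : (0:ℝ) ≤ 2 / T)]
      have hu : Real.sqrt (s * (T - s)) ≠ 0 := by positivity
      rw [hfdef]
      field_simp
    rw [heq] at h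
    exact h
  have hii : IntervalIntegrable f volume 0 T := by
    rw [intervalIntegrable_iff_integrableOn_Ioc_of_le hT.le]
    exact hint.congr_set_ae (MeasureTheory.Ioo_ae_eq_Ioc).symm
  have ha : Tendsto F (nhdsWithin 0 (Set.Ioi 0)) (nhds (-(π/2))) := by
    have h0 : F 0 = -(π/2) := by
      rw [hFdef]; norm_num [Real.arcsin_neg_one]
    have := (hcontF.tendsto 0).mono_left (nhdsWithin_le_nhds (s := Set.Ioi (0:ℝ)))
    rwa [h0] at this
  have hb : Tendsto F (nhdsWithin T (Set.Iio T)) (nhds (π/2)) := by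
    have h0 : F T = π/2 := by
      rw [hFdef]; simp only
      rw [show (2 / T) * T - 1 = 1 by field_simp; norm_num, Real.arcsin_one]
    have := (hcontF.tendsto T).mono_left (nhdsWithin_le_nhds (s := Set.Iio T))
    rwa [h0] at this
  have hval := intervalIntegral.integral_eq_sub_of_hasDerivAt_of_tendsto hT hderiv hii ha hb
  calc (∫ s in Set.Ioo (0:ℝ) T, f s) = ∫ s in Set.Ioc (0:ℝ) T, f s :=
        (integral_Ioc_eq_integral_Ioo).symm
    _ = ∫ s in (0:ℝ)..T, f s := (integral_of_le hT.le).symm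
    _ = π/2 - -(π/2) := hval
    _ = π := by ring

end Arcsin
set_option maxHeartbeats 1600000 in
lemma main_est (σp σm a : ℝ) (hp : 0 < σp) (hm : 0 < σm) (hne : σp ≠ σm) :
    ∃ C : ℝ, 0 ≤ C ∧ ∀ T : ℝ, 0 < T → T ≤ 1 →
      |Ffun σp σm T a - (a / Real.sqrt (2 * π) * Real.sqrt T + 1 / 2)| ≤ C * T := by
  obtain ⟨K, hK0, hKb⟩ := phi_bound σp σm hp hm hne
  set c : ℝ := Real.sqrt (2 * π) with hcdef
  have hcpos : 0 < c := sqrt_two_pi_pos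
  have hc2 : 2 ≤ c := two_le_sqrt_two_pi
  have hcc : c * c = 2 * π := Real.mul_self_sqrt (by positivity)
  set C0 : ℝ := K * (|a| / 2 + a ^ 2) with hC0def
  have hC00 : 0 ≤ C0 := by positivity
  refine ⟨K + a ^ 2 + C0, by positivity, fun T hT hT1 => ?_⟩
  have hsT : Real.sqrt T ≤ 1 := by
    rw [show (1:ℝ) = Real.sqrt 1 by simp]
    exact Real.sqrt_le_sqrt hT1
  set P : ℝ → ℝ := fun s => phi σp σm (T - s) * psi0 a s * Real.exp (-a ^ 2 * s / 2) with hPdef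
  set M : ℝ → ℝ := fun s =>
    (1 / (2 * π)) * (1 / Real.sqrt (s * (T - s))) + (a / (2 * c)) * (1 / Real.sqrt (T - s))
    with hMdef
  -- measurability
  have hstdNm : Measurable stdN := stdN_cont.measurable
  have hPm : Measurable P := by
    rw [hPdef]; unfold phi psi0
    fun_prop
  have hMm : Measurable M := by
    rw [hMdef]
    have h1 : Continuous fun s : ℝ => Real.sqrt (s * (T - s)) :=
      (continuous_id.mul (continuous_const.sub continuous_id)).sqrt
    have h2 : Continuous fun s : ℝ => Real.sqrt (T - s) :=
      (continuous_const.sub continuous_id).sqrt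
    simp only [one_div]
    exact ((h1.measurable.inv).const_mul _).add ((h2.measurable.inv).const_mul _)
  -- integrability and value of M
  have hM1 : IntegrableOn (fun s : ℝ => (1 / (2 * π)) * (1 / Real.sqrt (s * (T - s))))
      (Set.Ioo 0 T) volume := (int_arcsin hT).1.const_mul _
  have hM2 : IntegrableOn (fun s : ℝ => (a / (2 * c)) * (1 / Real.sqrt (T - s)))
      (Set.Ioo 0 T) volume := (int_rpow_Ioo' hT).1.const_mul _
  have hMint : IntegrableOn M (Set.Ioo 0 T) volume := hM1.add hM2
  have hMval : (∫ s in Set.Ioo (0:ℝ) T, M s) = 1 / 2 + a / c * Real.sqrt T := by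
    rw [hMdef]
    rw [MeasureTheory.integral_add hM1 hM2, MeasureTheory.integral_const_mul,
      MeasureTheory.integral_const_mul, (int_arcsin hT).2, (int_rpow_Ioo' hT).2]
    have hpi : (π:ℝ) ≠ 0 := Real.pi_ne_zero
    field_simp
  -- pointwise bound
  have hptwise : ∀ s ∈ Set.Ioo (0:ℝ) T, |P s - M s| ≤
      (K * Real.sqrt T / 2) * (1 / Real.sqrt s)
      + (a ^ 2 * Real.sqrt T / 2) * (1 / Real.sqrt (T - s)) + C0 := by
    intro s hs
    have hs0 : 0 < s := hs.1
    have hts : 0 < T - s := sub_pos.2 hs.2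
    set X := Real.sqrt s with hXdef
    set Y := Real.sqrt (T - s) with hYdef
    have hX0 : 0 < X := Real.sqrt_pos.2 hs0
    have hY0 : 0 < Y := Real.sqrt_pos.2 hts
    have hXT : X ≤ Real.sqrt T := Real.sqrt_le_sqrt (by linarith)
    have hYT : Y ≤ Real.sqrt T := Real.sqrt_le_sqrt (by linarith)
    have hX1 : X ≤ 1 := hXT.trans hsT
    have hY1 : Y ≤ 1 := hYT.trans hsT
    have hss : Real.sqrt (2 * π * s) = c * X := by
      rw [hcdef, hXdef, ← Real.sqrt_mul (by positivity)]
    have hst : Real.sqrt (2 * π * (T - s)) = c * Y := by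
      rw [hcdef, hYdef, ← Real.sqrt_mul (by positivity)]
    have hXY : Real.sqrt (s * (T - s)) = X * Y := Real.sqrt_mul hs0.le _
    set Φ := phi σp σm (T - s) with hΦdef
    set Ψ := psi0 a s * Real.exp (-a ^ 2 * s / 2) with hΨdef
    set g := Φ - 1 / (c * Y) with hgdef
    set h := Ψ - (1 / (c * X) + a / 2) with hhdef
    have hgb : |g| ≤ K * Y := by
      have := hKb (T - s) hts
      rwa [hst, ← hΦdef, ← hgdef, ← hYdef] at this
    have hhb : |h| ≤ a ^ 2 * X := by
      have := psi_bound a hs0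
      rwa [hss, ← hΨdef, ← hXdef, ← hhdef] at this
    have hΨb : |Ψ| ≤ 1 / (c * X) + |a| / 2 + a ^ 2 * X := by
      have e : Ψ = h + (1 / (c * X) + a / 2) := by rw [hhdef]; ring
      rw [e]
      calc |h + (1 / (c * X) + a / 2)| ≤ |h| + |1 / (c * X) + a / 2| := abs_add_le _ _
        _ ≤ a ^ 2 * X + (|1 / (c * X)| + |a / 2|) :=
            add_le_add hhb (abs_add_le _ _)
        _ = a ^ 2 * X + (1 / (c * X) + |a| / 2) := by
            rw [abs_of_nonneg (by positivity : (0:ℝ) ≤ 1 / (c * X)), abs_div]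
            norm_num
        _ = 1 / (c * X) + |a| / 2 + a ^ 2 * X := by ring
    have key : P s - M s = g * Ψ + (1 / (c * Y)) * h := by
      simp only [hPdef, hMdef, hΦdef, hΨdef, hgdef, hhdef]
      rw [hXY, ← hcc, ← hYdef]
      field_simp
      ring
    rw [key]
    have b1 : |g * Ψ| ≤ K * Real.sqrt T / 2 * (1 / X) + C0 := by
      rw [abs_mul]
      have step : |g| * |Ψ| ≤ (K * Y) * (1 / (c * X) + |a| / 2 + a ^ 2 * X) :=
        mul_le_mul hgb hΨb (abs_nonneg _) (by positivity)
      refine step.trans ?_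
      have t1 : K * Y * (1 / (c * X)) ≤ K * Real.sqrt T / 2 * (1 / X) := by
        have h1 : K * Y / c ≤ K * Real.sqrt T / 2 :=
          div_le_div₀ (by positivity) (mul_le_mul_of_nonneg_left hYT hK0) (by norm_num) hc2
        calc K * Y * (1 / (c * X)) = (K * Y / c) * (1 / X) := by ring
          _ ≤ K * Real.sqrt T / 2 * (1 / X) :=
              mul_le_mul_of_nonneg_right h1 (by positivity)
      have t2 : K * Y * (|a| / 2 + a ^ 2 * X) ≤ C0 := by
        rw [hC0def]
        have h2 : |a| / 2 + a ^ 2 * X ≤ |a| / 2 + a ^ 2 := by nlinarith [sq_nonneg a]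
        have h3 : K * Y ≤ K := by nlinarith
        calc K * Y * (|a| / 2 + a ^ 2 * X) ≤ K * Y * (|a| / 2 + a ^ 2) :=
              mul_le_mul_of_nonneg_left h2 (by positivity)
          _ ≤ K * (|a| / 2 + a ^ 2) := mul_le_mul_of_nonneg_right h3 (by positivity)
      calc K * Y * (1 / (c * X) + |a| / 2 + a ^ 2 * X)
          = K * Y * (1 / (c * X)) + K * Y * (|a| / 2 + a ^ 2 * X) := by ring
        _ ≤ K * Real.sqrt T / 2 * (1 / X) + C0 := add_le_add t1 t2
    have b2 : |(1 / (c * Y)) * h| ≤ a ^ 2 * Real.sqrt T / 2 * (1 / Y) := by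
      rw [abs_mul, abs_of_nonneg (by positivity : (0:ℝ) ≤ 1 / (c * Y))]
      have h1 : a ^ 2 * X / c ≤ a ^ 2 * Real.sqrt T / 2 :=
        div_le_div₀ (by positivity) (mul_le_mul_of_nonneg_left hXT (by positivity)) (by norm_num) hc2
      calc 1 / (c * Y) * |h| ≤ 1 / (c * Y) * (a ^ 2 * X) :=
            mul_le_mul_of_nonneg_left hhb (by positivity)
        _ = (a ^ 2 * X / c) * (1 / Y) := by ring
        _ ≤ a ^ 2 * Real.sqrt T / 2 * (1 / Y) := mul_le_mul_of_nonneg_right h1 (by positivity)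
    calc |g * Ψ + 1 / (c * Y) * h| ≤ |g * Ψ| + |1 / (c * Y) * h| := abs_add_le _ _
      _ ≤ (K * Real.sqrt T / 2 * (1 / X) + C0) + a ^ 2 * Real.sqrt T / 2 * (1 / Y) :=
          add_le_add b1 b2
      _ = _ := by ring
  -- bound function integrable with value
  set B : ℝ → ℝ := fun s => (K * Real.sqrt T / 2) * (1 / Real.sqrt s)
      + (a ^ 2 * Real.sqrt T / 2) * (1 / Real.sqrt (T - s)) + C0 with hBdef
  have hBint : IntegrableOn B (Set.Ioo 0 T) volume := by
    refine (((int_rpow_Ioo hT).1.const_mul _).add ((int_rpow_Ioo' hT).1.const_mul _)).add ?_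
    exact integrableOn_const (by rw [Real.volume_Ioo]; exact ENNReal.ofReal_ne_top)
  have hB1a : IntegrableOn (fun s : ℝ => (K * Real.sqrt T / 2) * (1 / Real.sqrt s))
      (Set.Ioo 0 T) volume := (int_rpow_Ioo hT).1.const_mul _
  have hB1b : IntegrableOn (fun s : ℝ => (a ^ 2 * Real.sqrt T / 2) * (1 / Real.sqrt (T - s)))
      (Set.Ioo 0 T) volume := (int_rpow_Ioo' hT).1.const_mul _
  have hB1 : IntegrableOn (fun s : ℝ => (K * Real.sqrt T / 2) * (1 / Real.sqrt s)
      + (a ^ 2 * Real.sqrt T / 2) * (1 / Real.sqrt (T - s))) (Set.Ioo 0 T) volume :=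
    hB1a.add hB1b
  have hBc : IntegrableOn (fun _ : ℝ => C0) (Set.Ioo 0 T) volume :=
    integrableOn_const (by rw [Real.volume_Ioo]; exact ENNReal.ofReal_ne_top)
  have hBval : (∫ s in Set.Ioo (0:ℝ) T, B s) ≤ (K + a ^ 2 + C0) * T := by
    rw [hBdef]
    rw [MeasureTheory.integral_add hB1 hBc, MeasureTheory.integral_add hB1a hB1b,
      MeasureTheory.integral_const_mul, MeasureTheory.integral_const_mul,
      (int_rpow_Ioo hT).2, (int_rpow_Ioo' hT).2, MeasureTheory.setIntegral_const]
    rw [Real.volume_real_Ioo_of_le (by linarith), smul_eq_mul]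
    have hTT : Real.sqrt T * Real.sqrt T = T := Real.mul_self_sqrt hT.le
    nlinarith [Real.sqrt_nonneg T]
  -- integrability of P - M and P
  have hD : IntegrableOn (fun s => P s - M s) (Set.Ioo 0 T) volume := by
    refine Integrable.mono' hBint ((hPm.sub hMm).aestronglyMeasurable.restrict) ?_
    refine (ae_restrict_iff' measurableSet_Ioo).2 (Filter.Eventually.of_forall fun s hs => ?_)
    rw [Real.norm_eq_abs]
    exact hptwise s hs
  have hPint : IntegrableOn P (Set.Ioo 0 T) volume := by
    have e : P = fun s => (P s - M s) + M s := by funext s; ring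
    rw [e]; exact hD.add hMint
  -- assemble
  have hFfun : Ffun σp σm T a = ∫ s in Set.Ioo (0:ℝ) T, P s := by
    unfold Ffun
    rw [intervalIntegral.integral_of_le hT.le, MeasureTheory.integral_Ioc_eq_integral_Ioo]
  have hsplitInt : (∫ s in Set.Ioo (0:ℝ) T, P s)
      = (∫ s in Set.Ioo (0:ℝ) T, P s - M s) + ∫ s in Set.Ioo (0:ℝ) T, M s := by
    rw [← MeasureTheory.integral_add hD hMint]
    congr 1; funext s; ring
  have hdiff : Ffun σp σm T a - (a / Real.sqrt (2 * π) * Real.sqrt T + 1 / 2)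
      = ∫ s in Set.Ioo (0:ℝ) T, P s - M s := by
    rw [hFfun, hsplitInt, hMval, ← hcdef]; ring
  rw [hdiff]
  have hnorm : ‖∫ s in Set.Ioo (0:ℝ) T, P s - M s‖ ≤ ∫ s in Set.Ioo (0:ℝ) T, B s := by
    refine MeasureTheory.norm_integral_le_of_norm_le hBint ?_
    refine (ae_restrict_iff' measurableSet_Ioo).2 (Filter.Eventually.of_forall fun s hs => ?_)
    rw [Real.norm_eq_abs]
    exact hptwise s hs
  rw [Real.norm_eq_abs] at hnorm
  exact hnorm.trans hBval
theorem stmt9 (σp σm a : ℝ) (hp : 0 < σp) (hm : 0 < σm) (hne : σp ≠ σm) :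
    (fun T : ℝ => Ffun σp σm T a - (a / Real.sqrt (2 * π) * Real.sqrt T + 1 / 2))
      =o[𝓝[>] 0] fun T : ℝ => Real.sqrt T := by
  obtain ⟨C, hC0, hC⟩ := main_est σp σm a hp hm hne
  rw [Asymptotics.isLittleO_iff]
  intro ε hε
  set δ : ℝ := min 1 ((ε / (C + 1)) ^ 2) with hδdef
  have hδpos : 0 < δ := lt_min one_pos (by positivity)
  filter_upwards [Ioo_mem_nhdsGT hδpos] with T hT
  have hT0 : 0 < T := hT.1
  have hT1 : T ≤ 1 := le_trans hT.2.le (min_le_left _ _)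
  have hTδ : T ≤ (ε / (C + 1)) ^ 2 := le_trans hT.2.le (min_le_right _ _)
  have hsT : Real.sqrt T ≤ ε / (C + 1) := by
    have := Real.sqrt_le_sqrt hTδ
    rwa [Real.sqrt_sq (by positivity : (0:ℝ) ≤ ε / (C + 1))] at this
  have hbound := hC T hT0 hT1
  have hTT : Real.sqrt T * Real.sqrt T = T := Real.mul_self_sqrt hT0.le
  rw [Real.norm_eq_abs, Real.norm_eq_abs, abs_of_nonneg (Real.sqrt_nonneg T)]
  calc |Ffun σp σm T a - (a / Real.sqrt (2 * π) * Real.sqrt T + 1 / 2)| ≤ C * T := hbound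
    _ = C * Real.sqrt T * Real.sqrt T := by rw [mul_assoc, hTT]
    _ ≤ ε * Real.sqrt T := by
        have h1 : C * Real.sqrt T ≤ C * (ε / (C + 1)) :=
          mul_le_mul_of_nonneg_left hsT hC0
        have h2 : C * (ε / (C + 1)) ≤ ε := by
          rw [mul_div_assoc', div_le_iff₀ (by positivity)]
          nlinarith
        exact mul_le_mul_of_nonneg_right (h1.trans h2) (Real.sqrt_nonneg T)
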